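/- arXiv:1710.03114 — 3 statements merged into one kernel-verified Lean document; each statement's English description precedes it below -/
import Mathlib

section
/- Let Ω be an open subset of ℂ, f a holomorphic function on Ω, and g(z) = z·f(z). Then T_n(g)(z) = z · f^{(n)}(z)/n! · (-z)^n, where T_n(g)(z) = ∑_{k=0}^{n} g^{(k)}(z)/k! (-z)^k. -/
/-- The `n`-th partial sum of the Taylor expansion of `f` with centre `z`, evaluated at `0`. -/
noncomputable def T (n : ℕ) (f : ℂ → ℂ) (z : ℂ) : ℂ :=
  ∑ k ∈ Finset.range (n + 1), iteratedDeriv k f z / (Nat.factorial k : ℂ) * (-z) ^ k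

/-! By Leibniz, `(z f)^{(k)} = z f^{(k)} + k f^{(k-1)}`, so the `k`-th Taylor term of `z f` is
`z f^{(k)}/k! (-z)^k - z f^{(k-1)}/(k-1)! (-z)^{k-1}`: the partial sum telescopes to its last
term. -/

theorem iteratedDeriv_id_mul {𝕜 : Type*} [NontriviallyNormedField 𝕜] {f : 𝕜 → 𝕜} {x : 𝕜}
    {k : ℕ} (hf : ContDiffAt 𝕜 k f x) :
    iteratedDeriv k (fun y ↦ y * f y) x =
      x * iteratedDeriv k f x + k * iteratedDeriv (k - 1) f x := by
  rw [iteratedDeriv_fun_mul (f := fun y ↦ y) contDiffAt_id hf]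
  rcases k with _ | k
  · simp
  · rw [Finset.sum_range_succ', Finset.sum_range_succ']
    simp [iteratedDeriv_fun_id, add_comm]

theorem T_id_mul {f : ℂ → ℂ} {z : ℂ} {n : ℕ} (hf : ContDiffAt ℂ n f z) :
    T n (fun y ↦ y * f y) z = z * (iteratedDeriv n f z / (Nat.factorial n : ℂ)) * (-z) ^ n := by
  induction n with
  | zero => simp [T]
  | succ n ih =>
    rw [T, Finset.sum_range_succ, ← T, ih (hf.of_le (by simp)), iteratedDeriv_id_mul hf,
      Nat.factorial_succ]
    push_cast
    field_simp
    ring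

theorem T_mul_id (Ω : Set ℂ) (hΩ : IsOpen Ω) (f : ℂ → ℂ) (hf : DifferentiableOn ℂ f Ω)
    (g : ℂ → ℂ) (hg : ∀ z, g z = z * f z) (n : ℕ) (z : ℂ) (hz : z ∈ Ω) :
    T n g z = z * (iteratedDeriv n f z / (Nat.factorial n : ℂ)) * (-z) ^ n := by
  obtain rfl : g = fun y ↦ y * f y := funext hg
  exact T_id_mul ((hf.contDiffOn hΩ).contDiffAt (hΩ.mem_nhds hz))
end

section
/- Let g be holomorphic on a neighbourhood of z₀ ∈ ℂ whose Taylor series at z₀ has radius of convergence R with 0 < R < ∞, and let ρ ≥ 1. Then limsup_{n→∞} ( max_{|z−z₀| ≤ ρR} |S_n(g,z₀)(z)| )^{1/n} = ρ, where S_n(g,z₀)(z) = ∑_{k=0}^{n} g^{(k)}(z₀)/k! (z−z₀)^k. -/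
/-! With `aₖ` the Taylor coefficients and `cₖ = ‖aₖ‖ (ρR)ᵏ`, the hypothesis on the radius says
`limsup cₖ^{1/k} = ρ`. The maximum `Mₙ` of the `n`-th partial sum on the disc of radius `ρR` lies
between `cₙ` (Cauchy's estimate for the top coefficient of a polynomial) and `c₀ + ⋯ + cₙ`.
For `s > ρ ≥ 1` the coefficients are eventually at most `sᵏ`, so the sum is `O(sⁿ)` and
`limsup Mₙ^{1/n} ≤ s`, while the lower bound gives `limsup Mₙ^{1/n} ≥ ρ`. -/

open Filter Metric

/-- The `n`-th partial sum of the Taylor series of `g` centred at `z₀`, evaluated at `z`. -/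
noncomputable def S (g : ℂ → ℂ) (z₀ : ℂ) (n : ℕ) (z : ℂ) : ℂ :=
  ∑ k ∈ Finset.range (n + 1), iteratedDeriv k g z₀ / (Nat.factorial k : ℂ) * (z - z₀) ^ k

open Finset Topology Asymptotics

-- `limsup` of a real sequence that is not bounded above is the junk value `sInf ∅ = 0`.
lemma Real.isBoundedUnder_le_of_limsup_ne_zero {α : Type*} {f : Filter α} {u : α → ℝ}
    (h : limsup u f ≠ 0) : IsBoundedUnder (· ≤ ·) f u := by
  by_contra hu
  have hempty : {a | ∀ᶠ n in f, u n ≤ a} = ∅ :=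
    Set.eq_empty_iff_forall_notMem.2 fun b hb => hu ⟨b, hb⟩
  exact h (by rw [limsup_eq, hempty, Real.sInf_empty])

lemma iteratedDeriv_sum_mul_sub_pow (c : ℕ → ℂ) (z₀ : ℂ) {s : Finset ℕ} {n : ℕ} (hn : n ∈ s) :
    iteratedDeriv n (fun z => ∑ k ∈ s, c k * (z - z₀) ^ k) z₀ = n.factorial * c n := by
  rw [iteratedDeriv_fun_sum fun k _ => by fun_prop, sum_eq_single_of_mem n hn]
  · simp [iteratedDeriv_comp_sub_const n (· ^ n) z₀, Nat.descFactorial_self, mul_comm]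
  · intro k _ hk
    simpa [iteratedDeriv_comp_sub_const n (· ^ k) z₀] using Or.inr (by omega)

lemma norm_coeff_mul_pow_le_of_forall_mem_sphere (c : ℕ → ℂ) (z₀ : ℂ) {s : Finset ℕ} {n : ℕ}
    (hn : n ∈ s) {r M : ℝ} (hr : 0 < r)
    (h : ∀ z ∈ sphere z₀ r, ‖∑ k ∈ s, c k * (z - z₀) ^ k‖ ≤ M) :
    ‖c n‖ * r ^ n ≤ M := by
  have hcauchy := Complex.norm_iteratedDeriv_le_of_forall_mem_sphere_norm_le n hr
    (Differentiable.diffContOnCl (by fun_prop)) h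
  rw [iteratedDeriv_sum_mul_sub_pow c z₀ hn, norm_mul, Complex.norm_natCast,
    mul_div_assoc, mul_le_mul_iff_right₀ (by positivity), le_div_iff₀ (by positivity)] at hcauchy
  exact hcauchy

lemma norm_sum_mul_sub_pow_le (c : ℕ → ℂ) (s : Finset ℕ) {z₀ z : ℂ} {r : ℝ}
    (hz : z ∈ closedBall z₀ r) :
    ‖∑ k ∈ s, c k * (z - z₀) ^ k‖ ≤ ∑ k ∈ s, ‖c k‖ * r ^ k := by
  refine (norm_sum_le _ _).trans (sum_le_sum fun k _ => ?_)
  rw [norm_mul, norm_pow]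
  gcongr
  exact mem_closedBall_iff_norm.1 hz

section RootTest

variable {c : ℕ → ℝ}

lemma eventually_le_pow_of_limsup_root_lt {s : ℝ} (hc : ∀ k, 0 ≤ c k)
    (hbdd : IsBoundedUnder (· ≤ ·) atTop fun k => c k ^ (1 / (k : ℝ)))
    (hs : limsup (fun k => c k ^ (1 / (k : ℝ))) atTop < s) : ∀ᶠ k in atTop, c k ≤ s ^ k := by
  filter_upwards [eventually_lt_of_limsup_lt hs hbdd, eventually_ne_atTop 0] with k hk hk0
  calc c k = (c k ^ (1 / (k : ℝ))) ^ k := by rw [one_div, Real.rpow_inv_natCast_pow (hc k) hk0]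
    _ ≤ s ^ k := pow_le_pow_left₀ (Real.rpow_nonneg (hc k) _) hk.le k

lemma exists_forall_le_mul_pow_of_eventually_le {s : ℝ} (hc : ∀ k, 0 ≤ c k) (hs : 0 < s)
    (h : ∀ᶠ k in atTop, c k ≤ s ^ k) : ∃ C > 0, ∀ k, c k ≤ C * s ^ k := by
  have hO : c =O[atTop] fun k => s ^ k :=
    IsBigO.of_bound 1 <| h.mono fun k hk => by
      rwa [Real.norm_of_nonneg (hc k), Real.norm_of_nonneg (by positivity), one_mul]
  obtain ⟨C, hC, hbound⟩ := bound_of_isBigO_nat_atTop hO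
  refine ⟨C, hC, fun k => ?_⟩
  simpa [Real.norm_of_nonneg (hc k), abs_of_pos hs] using hbound (pow_ne_zero k hs.ne')

lemma sum_range_succ_le_mul_pow {C s : ℝ} (hC : 0 ≤ C) (hs : 1 < s) (h : ∀ k, c k ≤ C * s ^ k)
    (n : ℕ) : ∑ k ∈ range (n + 1), c k ≤ C * s / (s - 1) * s ^ n := by
  have hs1 : 0 < s - 1 := sub_pos.2 hs
  calc ∑ k ∈ range (n + 1), c k ≤ ∑ k ∈ range (n + 1), C * s ^ k := sum_le_sum fun k _ => h k
    _ = C * ((s ^ (n + 1) - 1) / (s - 1)) := by rw [← mul_sum, geom_sum_eq hs.ne']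
    _ ≤ C * (s ^ (n + 1) / (s - 1)) := by gcongr; linarith
    _ = C * s / (s - 1) * s ^ n := by rw [pow_succ]; ring

lemma eventually_root_le_of_le_mul_pow {x : ℕ → ℝ} {E s t : ℝ} (hx : ∀ n, 0 ≤ x n) (hE : 0 < E)
    (hs : 0 ≤ s) (h : ∀ n, x n ≤ E * s ^ n) (hst : s < t) :
    ∀ᶠ n in atTop, x n ^ (1 / (n : ℝ)) ≤ t := by
  have hlim : Tendsto (fun n : ℕ => E ^ (1 / (n : ℝ)) * s) atTop (𝓝 s) := by
    have h0 := ((Real.continuousAt_const_rpow hE.ne').tendsto.comp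
      tendsto_one_div_atTop_nhds_zero_nat).mul_const s
    simpa using h0
  filter_upwards [hlim.eventually_lt_const hst, eventually_ne_atTop 0] with n hn hn0
  calc x n ^ (1 / (n : ℝ)) ≤ (E * s ^ n) ^ (1 / (n : ℝ)) := by gcongr; exacts [hx n, h n]
    _ = E ^ (1 / (n : ℝ)) * s := by
      rw [Real.mul_rpow hE.le (by positivity), one_div, Real.pow_rpow_inv_natCast hs hn0]
    _ ≤ t := hn.le

end RootTest

lemma limsup_root_mul_pow {b : ℕ → ℝ} {r : ℝ} (hb : ∀ k, 0 ≤ b k) (hr : 0 ≤ r)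
    (hbdd : IsBoundedUnder (· ≤ ·) atTop fun k => b k ^ (1 / (k : ℝ))) :
    limsup (fun k => (b k * r ^ k) ^ (1 / (k : ℝ))) atTop
      = r * limsup (fun k => b k ^ (1 / (k : ℝ))) atTop := by
  rw [(monotone_mul_left_of_nonneg hr).map_limsup_of_continuousAt _
    (continuous_const_mul r).continuousAt hbdd
    (isCoboundedUnder_le_of_le atTop fun k => Real.rpow_nonneg (hb k) _)]
  refine limsup_congr ?_
  filter_upwards [eventually_ne_atTop 0] with k hk
  rw [Function.comp_apply, Real.mul_rpow (hb k) (by positivity), one_div,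
    Real.pow_rpow_inv_natCast hr hk, mul_comm]

theorem limsup_root_eq_of_le_of_le_sum {c M : ℕ → ℝ} {ρ : ℝ} (hc : ∀ k, 0 ≤ c k) (hρ : 1 ≤ ρ)
    (hlim : limsup (fun k => c k ^ (1 / (k : ℝ))) atTop = ρ)
    (hlow : ∀ n, c n ≤ M n) (hup : ∀ n, M n ≤ ∑ k ∈ range (n + 1), c k) :
    limsup (fun n => M n ^ (1 / (n : ℝ))) atTop = ρ := by
  have hM : ∀ n, 0 ≤ M n := fun n => (hc n).trans (hlow n)
  have hbdd := Real.isBoundedUnder_le_of_limsup_ne_zero (hlim ▸ (zero_lt_one.trans_le hρ).ne')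
  have hevent : ∀ t, ρ < t → ∀ᶠ n in atTop, M n ^ (1 / (n : ℝ)) ≤ t := by
    intro t ht
    obtain ⟨s, hρs, hst⟩ := exists_between ht
    have hs : 1 < s := hρ.trans_lt hρs
    obtain ⟨C, hC, hcC⟩ := exists_forall_le_mul_pow_of_eventually_le hc (by positivity)
      (eventually_le_pow_of_limsup_root_lt hc hbdd (hlim ▸ hρs))
    have hE : 0 < C * s / (s - 1) := div_pos (by positivity) (sub_pos.2 hs)
    exact eventually_root_le_of_le_mul_pow hM hE (by positivity)
      (fun n => (hup n).trans (sum_range_succ_le_mul_pow hC.le hs hcC n)) hst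
  have hupper : limsup (fun n => M n ^ (1 / (n : ℝ))) atTop ≤ ρ :=
    le_of_forall_gt_imp_ge_of_dense fun t ht => limsup_le_of_le
      (isCoboundedUnder_le_of_le atTop fun n => Real.rpow_nonneg (hM n) _) (hevent t ht)
  have hlower : ρ ≤ limsup (fun n => M n ^ (1 / (n : ℝ))) atTop :=
    hlim ▸ limsup_le_limsup
      (Eventually.of_forall fun n => Real.rpow_le_rpow (hc n) (hlow n) (by positivity))
      (isCoboundedUnder_le_of_le atTop fun n => Real.rpow_nonneg (hc n) _)
      (isBoundedUnder_of_eventually_le (hevent (ρ + 1) (by linarith)))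
  exact le_antisymm hupper hlower

theorem limsup_sup_partial_sums_general (g : ℂ → ℂ) (z₀ : ℂ) (R : ℝ) (hR0 : 0 < R)
    (hradius : Filter.limsup
      (fun k : ℕ => ‖iteratedDeriv k g z₀ / (Nat.factorial k : ℂ)‖ ^ (1 / (k : ℝ)))
      Filter.atTop = 1 / R)
    (ρ : ℝ) (hρ : 1 ≤ ρ) :
    Filter.limsup
      (fun n : ℕ =>
        (sSup ((fun z => ‖S g z₀ n z‖) '' closedBall z₀ (ρ * R))) ^ (1 / (n : ℝ)))
      Filter.atTop = ρ := by
  set a : ℕ → ℂ := fun k => iteratedDeriv k g z₀ / (Nat.factorial k : ℂ)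
  have hr : 0 < ρ * R := by positivity
  have hS : ∀ n, Continuous fun z => ‖S g z₀ n z‖ := fun n => by unfold S; fun_prop
  refine limsup_root_eq_of_le_of_le_sum (c := fun k => ‖a k‖ * (ρ * R) ^ k)
    (fun k => by positivity) hρ ?_ (fun n => ?_) (fun n => ?_)
  · rw [limsup_root_mul_pow (fun k => norm_nonneg _) hr.le
      (Real.isBoundedUnder_le_of_limsup_ne_zero (hradius ▸ one_div_ne_zero hR0.ne')), hradius]
    field_simp
  · exact norm_coeff_mul_pow_le_of_forall_mem_sphere a z₀ (self_mem_range_succ n) hr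
      fun z hz => le_csSup ((isCompact_closedBall z₀ _).bddAbove_image (hS n).continuousOn)
        ⟨z, sphere_subset_closedBall hz, rfl⟩
  · refine csSup_le ((nonempty_closedBall.2 hr.le).image _) ?_
    rintro _ ⟨z, hz, rfl⟩
    exact norm_sum_mul_sub_pow_le a _ hz

theorem limsup_sup_partial_sums (g : ℂ → ℂ) (z₀ : ℂ) (ε : ℝ) (hε : 0 < ε)
    (hg : DifferentiableOn ℂ g (ball z₀ ε)) (R : ℝ) (hR0 : 0 < R)
    (hradius : Filter.limsup
      (fun k : ℕ => ‖iteratedDeriv k g z₀ / (Nat.factorial k : ℂ)‖ ^ (1 / (k : ℝ)))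
      Filter.atTop = 1 / R)
    (ρ : ℝ) (hρ : 1 ≤ ρ) :
    Filter.limsup
      (fun n : ℕ =>
        (sSup ((fun z => ‖S g z₀ n z‖) '' closedBall z₀ (ρ * R))) ^ (1 / (n : ℝ)))
      Filter.atTop = ρ :=
  limsup_sup_partial_sums_general g z₀ R hR0 hradius ρ hρ
end

section
/- Let z₀ ∈ ℂ, r > 0 with 0 ∉ D(z₀,r), and let log be a branch of the logarithm on D(z₀,r). Then the functions of the form z ↦ P(log z), where P ranges over polynomials with coefficients in ℚ + iℚ, form a dense subset of H(D(z₀,r)) in the topology of uniform convergence on compact subsets. -/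
open Filter Metric

/-- The collection of compact subsets of the ball `D(z₀, r)`. -/
def Compacts (z₀ : ℂ) (r : ℝ) : Set (Set ℂ) := {K | IsCompact K ∧ K ⊆ ball z₀ r}

/-- The space `H(D(z₀,r))` of holomorphic functions on the disc, carrying the topology of
uniform convergence on compact subsets of the disc. -/
def Hol (z₀ : ℂ) (r : ℝ) : Type :=
  {f : UniformOnFun ℂ ℂ (Compacts z₀ r) //
    DifferentiableOn ℂ (UniformOnFun.toFun (Compacts z₀ r) f) (ball z₀ r)}

noncomputable instance (z₀ : ℂ) (r : ℝ) : TopologicalSpace (Hol z₀ r) :=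
  instTopologicalSpaceSubtype

/-- A polynomial has coefficients in `ℚ + iℚ`. -/
def RatCoeff (P : Polynomial ℂ) : Prop :=
  ∀ n, ∃ a b : ℚ, P.coeff n = (a : ℂ) + (b : ℂ) * Complex.I

/-! On a compact `K ⊆ D(z₀, r)`, `f` is uniformly close to a Taylor polynomial `S (z - z₀)`.
Since `exp ∘ L = id`, this is `g ∘ L` for the entire function `g w = S (exp w - z₀)`, and `g` is
uniformly close on the bounded set `L '' K` to one of its own Taylor polynomials, whose
coefficients can finally be moved into `ℚ + iℚ`. -/

open Complex Bornology
open scoped Topology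

lemma denseRange_ratCast_add_ratCast_mul_I :
    DenseRange (fun q : ℚ × ℚ => (q.1 : ℂ) + q.2 * I) := by
  have hprod := (Rat.denseRange_cast (𝕜 := ℝ)).prodMap (Rat.denseRange_cast (𝕜 := ℝ))
  convert equivRealProdCLM.symm.surjective.denseRange.comp hprod
    equivRealProdCLM.symm.continuous using 1
  funext q
  apply Complex.ext <;> simp

lemma RatCoeff.add {P Q : Polynomial ℂ} (hP : RatCoeff P) (hQ : RatCoeff Q) :
    RatCoeff (P + Q) := by
  intro n
  obtain ⟨a, b, ha⟩ := hP n
  obtain ⟨c, d, hc⟩ := hQ n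
  exact ⟨a + c, b + d, by rw [Polynomial.coeff_add, ha, hc]; push_cast; ring⟩

lemma ratCoeff_monomial (n : ℕ) (x y : ℚ) :
    RatCoeff (Polynomial.monomial n ((x : ℂ) + y * I)) := by
  intro k
  by_cases h : n = k
  · exact ⟨x, y, by simp [h]⟩
  · exact ⟨0, 0, by simp [Polynomial.coeff_monomial, h]⟩

lemma exists_ratCoeff_near_polynomial (P : Polynomial ℂ) {B : Set ℂ} (hB : IsBounded B)
    {ε : ℝ} (hε : 0 < ε) :
    ∃ Q : Polynomial ℂ, RatCoeff Q ∧ ∀ w ∈ B, ‖Q.eval w - P.eval w‖ < ε := by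
  obtain ⟨M, hM⟩ := hB.subset_closedBall 0
  have hnorm : ∀ w ∈ B, ‖w‖ ≤ |M| := fun w hw =>
    (mem_closedBall_zero_iff.mp (hM hw)).trans (le_abs_self M)
  induction P using Polynomial.induction_on' generalizing ε with
  | add p q hp hq =>
    obtain ⟨Qp, hQp, hp⟩ := hp (half_pos hε)
    obtain ⟨Qq, hQq, hq⟩ := hq (half_pos hε)
    refine ⟨Qp + Qq, hQp.add hQq, fun w hw => ?_⟩
    calc ‖(Qp + Qq).eval w - (p + q).eval w‖
        = ‖(Qp.eval w - p.eval w) + (Qq.eval w - q.eval w)‖ := by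
          rw [Polynomial.eval_add, Polynomial.eval_add, add_sub_add_comm]
      _ ≤ ‖Qp.eval w - p.eval w‖ + ‖Qq.eval w - q.eval w‖ := norm_add_le _ _
      _ < ε / 2 + ε / 2 := add_lt_add (hp w hw) (hq w hw)
      _ = ε := add_halves ε
  | monomial n a =>
    have hC : 0 < |M| ^ n + 1 := by positivity
    obtain ⟨⟨x, y⟩, hxy⟩ :=
      denseRange_ratCast_add_ratCast_mul_I.exists_dist_lt a (div_pos hε hC)
    rw [dist_comm, dist_eq_norm] at hxy
    refine ⟨_, ratCoeff_monomial n x y, fun w hw => ?_⟩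
    have hw : ‖w‖ ^ n ≤ |M| ^ n + 1 :=
      (pow_le_pow_left₀ (norm_nonneg w) (hnorm w hw) n).trans (le_add_of_nonneg_right zero_le_one)
    calc ‖(Polynomial.monomial n ((x : ℂ) + y * I)).eval w - (Polynomial.monomial n a).eval w‖
        = ‖(x : ℂ) + y * I - a‖ * ‖w‖ ^ n := by
          rw [Polynomial.eval_monomial, Polynomial.eval_monomial, ← sub_mul, norm_mul, norm_pow]
      _ ≤ ‖(x : ℂ) + y * I - a‖ * (|M| ^ n + 1) := by gcongr
      _ < ε / (|M| ^ n + 1) * (|M| ^ n + 1) := by gcongr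
      _ = ε := div_mul_cancel₀ ε hC.ne'

lemma exists_polynomial_eq_partialSum (p : FormalMultilinearSeries ℂ ℂ ℂ) (n : ℕ) :
    ∃ P : Polynomial ℂ, ∀ y, P.eval y = p.partialSum n y := by
  refine ⟨∑ k ∈ Finset.range n, Polynomial.C (p.coeff k) * Polynomial.X ^ k, fun y => ?_⟩
  rw [FormalMultilinearSeries.partialSum, Polynomial.eval_finsetSum]
  refine Finset.sum_congr rfl fun k _ => ?_
  rw [FormalMultilinearSeries.apply_eq_pow_smul_coeff, smul_eq_mul, Polynomial.eval_mul,
    Polynomial.eval_C, Polynomial.eval_pow, Polynomial.eval_X, mul_comm]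

theorem DifferentiableOn.exists_polynomial_near {f : ℂ → ℂ} {c : ℂ} {R ρ : ℝ}
    (hf : DifferentiableOn ℂ f (ball c R)) (hρ : ρ < R) {ε : ℝ} (hε : 0 < ε) :
    ∃ P : Polynomial ℂ, ∀ z ∈ ball c ρ, ‖P.eval (z - c) - f z‖ < ε := by
  rcases le_or_gt ρ 0 with hρ0 | hρ0
  · exact ⟨0, by simp [ball_eq_empty.mpr hρ0]⟩
  obtain ⟨R', hρR', hR'R⟩ := exists_between hρ
  have hR'0 : 0 < R' := hρ0.trans hρR'
  have hdiff : DifferentiableOn ℂ f (closedBall c R'.toNNReal) := by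
    rw [Real.coe_toNNReal _ hR'0.le]
    exact hf.mono (closedBall_subset_ball hR'R)
  have hps := hdiff.hasFPowerSeriesOnBall (by simpa using hR'0)
  have hlt : (ρ.toNNReal : ENNReal) < R'.toNNReal := by
    exact_mod_cast (Real.toNNReal_lt_toNNReal_iff hR'0).mpr hρR'
  obtain ⟨n, hn⟩ := (Metric.tendstoUniformlyOn_iff.mp (hps.tendstoUniformlyOn' hlt) ε hε).exists
  obtain ⟨P, hP⟩ := exists_polynomial_eq_partialSum (cauchyPowerSeries f c R'.toNNReal) n
  refine ⟨P, fun z hz => ?_⟩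
  rw [hP, ← dist_eq_norm, dist_comm]
  exact hn z (by simpa [hρ0.le] using hz)

theorem Differentiable.exists_ratCoeff_near {g : ℂ → ℂ} (hg : Differentiable ℂ g) {B : Set ℂ}
    (hB : IsBounded B) {ε : ℝ} (hε : 0 < ε) :
    ∃ Q : Polynomial ℂ, RatCoeff Q ∧ ∀ w ∈ B, ‖Q.eval w - g w‖ < ε := by
  obtain ⟨M, hM⟩ := hB.subset_ball 0
  obtain ⟨P, hP⟩ := hg.differentiableOn.exists_polynomial_near (lt_add_one M) (half_pos hε)
  obtain ⟨Q, hQ, hQP⟩ := exists_ratCoeff_near_polynomial P hB (half_pos hε)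
  refine ⟨Q, hQ, fun w hw => ?_⟩
  have hPw := hP w (hM hw)
  rw [sub_zero] at hPw
  calc ‖Q.eval w - g w‖ ≤ ‖Q.eval w - P.eval w‖ + ‖P.eval w - g w‖ :=
        norm_sub_le_norm_sub_add_norm_sub _ _ _
    _ < ε / 2 + ε / 2 := add_lt_add (hQP w hw) hPw
    _ = ε := add_halves ε

theorem exists_ratCoeff_eval_comp_near {z₀ : ℂ} {r : ℝ} {L f : ℂ → ℂ} {K : Set ℂ}
    (hL : ContinuousOn L K) (hexp : ∀ z ∈ K, exp (L z) = z)
    (hf : DifferentiableOn ℂ f (ball z₀ r)) (hK : IsCompact K) (hKr : K ⊆ ball z₀ r)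
    {ε : ℝ} (hε : 0 < ε) :
    ∃ Q : Polynomial ℂ, RatCoeff Q ∧ ∀ z ∈ K, ‖Q.eval (L z) - f z‖ < ε := by
  obtain ⟨ρ, hρ, hKρ⟩ := exists_lt_subset_ball hK.isClosed hKr
  obtain ⟨S, hS⟩ := hf.exists_polynomial_near hρ (half_pos hε)
  have hg : Differentiable ℂ (fun w => S.eval (exp w - z₀)) :=
    S.differentiable.comp (differentiable_exp.sub_const z₀)
  obtain ⟨Q, hQ, hQS⟩ :=
    hg.exists_ratCoeff_near (hK.image_of_continuousOn hL).isBounded (half_pos hε)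
  refine ⟨Q, hQ, fun z hz => ?_⟩
  have hQz := hQS (L z) (Set.mem_image_of_mem L hz)
  rw [hexp z hz] at hQz
  calc ‖Q.eval (L z) - f z‖ ≤ ‖Q.eval (L z) - S.eval (z - z₀)‖ + ‖S.eval (z - z₀) - f z‖ :=
        norm_sub_le_norm_sub_add_norm_sub _ _ _
    _ < ε / 2 + ε / 2 := add_lt_add hQz (hS z (hKρ hz))
    _ = ε := add_halves ε

theorem Hol.mem_closure_of_forall_exists {z₀ : ℂ} {r : ℝ} {S : Set (Hol z₀ r)} {f : Hol z₀ r}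
    (h : ∀ K ∈ Compacts z₀ r, ∀ ε > 0, ∃ g ∈ S, ∀ z ∈ K,
      dist (UniformOnFun.toFun _ g.1 z) (UniformOnFun.toFun _ f.1 z) < ε) :
    f ∈ closure S := by
  have hdir : DirectedOn (· ⊆ ·) (Compacts z₀ r) := fun K hK K' hK' =>
    ⟨K ∪ K', ⟨hK.1.union hK'.1, Set.union_subset hK.2 hK'.2⟩,
      Set.subset_union_left, Set.subset_union_right⟩
  have hnhds : 𝓝 f = comap (Subtype.val : Hol z₀ r → _) (𝓝 f.1) := nhds_induced _ _
  have hbasis := hnhds ▸ (UniformOnFun.hasBasis_nhds_of_basis ℂ ℂ (Compacts z₀ r) f.1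
    ⟨∅, isCompact_empty, Set.empty_subset _⟩ hdir uniformity_basis_dist).comap Subtype.val
  refine (mem_closure_iff_nhds_basis hbasis).mpr fun ⟨K, ε⟩ ⟨hK, hε⟩ => ?_
  obtain ⟨g, hgS, hg⟩ := h K hK ε hε
  exact ⟨g, hgS, hg⟩

theorem ratPolyLog_dense_general (z₀ : ℂ) (r : ℝ)
    (L : ℂ → ℂ) (hL : DifferentiableOn ℂ L (ball z₀ r))
    (hexp : ∀ z ∈ ball z₀ r, Complex.exp (L z) = z) :
    Dense {f : Hol z₀ r | ∃ P : Polynomial ℂ, RatCoeff P ∧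
      ∀ z ∈ ball z₀ r, UniformOnFun.toFun (Compacts z₀ r) f.1 z = P.eval (L z)} := by
  intro f
  refine Hol.mem_closure_of_forall_exists fun K ⟨hK, hKr⟩ ε hε => ?_
  obtain ⟨Q, hQ, hQf⟩ := exists_ratCoeff_eval_comp_near (hL.continuousOn.mono hKr)
    (fun z hz => hexp z (hKr hz)) f.2 hK hKr hε
  refine ⟨⟨UniformOnFun.ofFun _ fun z => Q.eval (L z),
    Q.differentiable.comp_differentiableOn hL⟩, ⟨Q, hQ, fun z _ => rfl⟩, fun z hz => ?_⟩
  rw [dist_eq_norm]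
  exact hQf z hz

theorem ratPolyLog_dense (z₀ : ℂ) (r : ℝ) (hr : 0 < r) (h0 : (0 : ℂ) ∉ ball z₀ r)
    (L : ℂ → ℂ) (hL : DifferentiableOn ℂ L (ball z₀ r))
    (hexp : ∀ z ∈ ball z₀ r, Complex.exp (L z) = z) :
    Dense {f : Hol z₀ r | ∃ P : Polynomial ℂ, RatCoeff P ∧
      ∀ z ∈ ball z₀ r, UniformOnFun.toFun (Compacts z₀ r) f.1 z = P.eval (L z)} :=
  ratPolyLog_dense_general z₀ r L hL hexp
end
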